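/- arXiv:1709.02865 — 4 statements merged into one kernel-verified Lean document; each statement's English description precedes it below -/
import Mathlib

section
/- In a generalized Stag Hunt, the critical prosociality ᾱ := (m−g)/(c−g) satisfies ᾱ ∈ (0,1], and for every α with ᾱ ≤ α ≤ 1 and every p ∈ [0,1], the expected prosocial utility of Hunt is at least that of Forage: p·h + (1−p)·((1−α)g + αc) ≥ p·(αg + (1−α)c) + (1−p)·m; that is, Hunt is a weakly dominant strategy for the prosocial agent. -/
/-- In a generalized Stag Hunt (payoffs `h > c ≥ m > g`), the critical prosociality
`ᾱ = (m−g)/(c−g)` lies in `(0,1]`, and for every `α` with `ᾱ ≤ α ≤ 1` and every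
`p ∈ [0,1]`, Hunt's expected prosocial utility is at least Forage's, i.e. Hunt is
weakly dominant. -/
theorem stag_hunt_hunt_weakly_dominant
    (h c m g : ℝ) (hhc : h > c) (hcm : c ≥ m) (hmg : m > g) :
    (0 < (m - g) / (c - g) ∧ (m - g) / (c - g) ≤ 1)
    ∧ ∀ α : ℝ, (m - g) / (c - g) ≤ α → α ≤ 1 →
        ∀ p : ℝ, 0 ≤ p → p ≤ 1 →
          p * h + (1 - p) * ((1 - α) * g + α * c)
            ≥ p * (α * g + (1 - α) * c) + (1 - p) * m := by
  have hcg : 0 < c - g := by linarith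
  refine ⟨⟨div_pos (by linarith) hcg, by rw [div_le_one hcg]; linarith⟩, ?_⟩
  intro α hα hα1 p hp hp1
  rw [div_le_iff₀ hcg] at hα
  nlinarith [mul_nonneg hp (by linarith : (0:ℝ) ≤ h - c), mul_nonneg hp (by linarith : (0:ℝ) ≤ α * (c - g) - (m - g)),
    mul_nonneg (by linarith : (0:ℝ) ≤ 1 - p) (by linarith : (0:ℝ) ≤ α * (c - g) - (m - g))]
end

section
/- In a generalized Stag Hunt with c > m, for every α with (m−g)/(c−g) < α ≤ 1 and every p ∈ [0,1], the expected prosocial utility of Hunt strictly exceeds that of Forage: p·h + (1−p)·((1−α)g + αc) > p·(αg + (1−α)c) + (1−p)·m; that is, Hunt is a strictly dominant strategy for the prosocial agent. -/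
/-- In a generalized Stag Hunt (payoffs `h > c ≥ m > g`) with `c > m`, for every `α` with
`(m−g)/(c−g) < α ≤ 1` and every `p ∈ [0,1]`, Hunt's expected prosocial utility strictly
exceeds Forage's, i.e. Hunt is strictly dominant. -/
theorem stag_hunt_hunt_strictly_dominant
    (h c m g : ℝ) (hhc : h > c) (hcm : c ≥ m) (hmg : m > g) (hcm' : c > m)
    (α : ℝ) (hα : (m - g) / (c - g) < α) (hα1 : α ≤ 1)
    (p : ℝ) (hp0 : 0 ≤ p) (hp1 : p ≤ 1) :
    p * h + (1 - p) * ((1 - α) * g + α * c)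
      > p * (α * g + (1 - α) * c) + (1 - p) * m := by
  have hcg : (0:ℝ) < c - g := by linarith
  have key : m - g < α * (c - g) := (div_lt_iff₀ hcg).mp hα
  have hαpos : 0 < α := by nlinarith
  nlinarith [mul_nonneg hp0 (sub_nonneg.mpr hα1), mul_nonneg hp0 hαpos.le,
    mul_nonneg (sub_nonneg.mpr hp1) (by nlinarith : (0:ℝ) ≤ α * (c - g) - (m - g)), mul_pos hαpos hcg]
end

section
/- In a symmetric N×N game in which every 2×2 subgame is a generalized Stag Hunt, the profile (0,0) is the unique maximizer of the joint payoff: for every profile (i,j) ≠ (0,0), U_{ij} + U_{ji} < 2·U_{00}. -/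
/-- In a symmetric `N×N` game in which every `2×2` subgame is a generalized Stag Hunt
(for all `i < j`, `U i i > U j i ≥ U j j > U i j`), the profile `(0,0)` is the unique
maximizer of the joint payoff: for every profile `(i,j) ≠ (0,0)`,
`U i j + U j i < 2·U 0 0`. -/
theorem stag_hunt_matrix_zero_zero_joint_optimal
    (N : ℕ) (hN : 2 ≤ N) (U : Fin N → Fin N → ℝ)
    (hSH : ∀ i j : Fin N, i < j → U i i > U j i ∧ U j i ≥ U j j ∧ U j j > U i j) :
    ∀ i j : Fin N, (i, j) ≠ ((⟨0, by omega⟩ : Fin N), (⟨0, by omega⟩ : Fin N)) →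
      U i j + U j i < 2 * U ⟨0, by omega⟩ ⟨0, by omega⟩ := by
  intro i j hne
  set z : Fin N := ⟨0, by omega⟩ with hz
  have hdiag : ∀ k : Fin N, k ≠ z → U k k < U z z := by
    intro k hk
    have hzk : z < k := by
      rcases Fin.lt_or_lt_of_ne hk with h | h
      · exact absurd h (by simp [hz, Fin.lt_def])
      · exact h
    obtain ⟨h1, h2, _⟩ := hSH z k hzk
    linarith
  have hdiag' : ∀ k : Fin N, U k k ≤ U z z := by
    intro k
    by_cases hk : k = z
    · simp [hk]
    · exact le_of_lt (hdiag k hk)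
  rcases lt_trichotomy i j with h | h | h
  · obtain ⟨h1, h2, h3⟩ := hSH i j h
    have := hdiag' i
    linarith
  · subst h
    have hi : i ≠ z := by simpa using hne
    have := hdiag i hi
    linarith
  · obtain ⟨h1, h2, h3⟩ := hSH j i h
    have := hdiag' j
    linarith
end

section
/- Let U be an N×N real matrix (N ≥ 2) such that for all i < j, U_{ii} > U_{ji} > U_{jj} > U_{ij}. Then there exists α ∈ (0,1) such that the interpolated matrix U^α = (1−α)U + αU^T satisfies, for all i < j: U^α_{ii} > U^α_{ij} > U^α_{jj} > U^α_{ji} (note U^α_{ii} = U_{ii} and U^α_{jj} = U_{jj}). -/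
/-- Let `U` be an `N×N` real matrix (`N ≥ 2`) with, for all `i < j`,
`U i i > U j i > U j j > U i j`. Then there exists `α ∈ (0,1)` such that the
interpolated matrix `U^α = (1−α)U + αUᵀ` (so `U^α_{ij} = (1−α)·U i j + α·U j i`)
satisfies, for all `i < j`: `U^α_{ii} > U^α_{ij} > U^α_{jj} > U^α_{ji}`
(note `U^α_{ii} = U i i` and `U^α_{jj} = U j j`). -/
theorem stag_hunt_matrix_interpolation_reorders
    (N : ℕ) (hN : 2 ≤ N) (U : Fin N → Fin N → ℝ)
    (hSH : ∀ i j : Fin N, i < j → U i i > U j i ∧ U j i > U j j ∧ U j j > U i j) :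
    ∃ α : ℝ, 0 < α ∧ α < 1 ∧ ∀ i j : Fin N, i < j →
      U i i > (1 - α) * U i j + α * U j i
      ∧ (1 - α) * U i j + α * U j i > U j j
      ∧ U j j > (1 - α) * U j i + α * U i j := by
  classical
  have hNpos : 0 < N := by omega
  set t : Fin N × Fin N → ℝ := fun p =>
    if p.1 < p.2 then
      max ((U p.2 p.2 - U p.1 p.2) / (U p.2 p.1 - U p.1 p.2))
          ((U p.2 p.1 - U p.2 p.2) / (U p.2 p.1 - U p.1 p.2))
    else 0 with ht
  have hne : (Finset.univ : Finset (Fin N × Fin N)).Nonempty :=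
    ⟨(⟨0, hNpos⟩, ⟨0, hNpos⟩), Finset.mem_univ _⟩
  set T := Finset.univ.sup' hne t with hT
  have hT1 : T < 1 := by
    rw [hT, Finset.sup'_lt_iff hne]
    intro p _
    by_cases h : p.1 < p.2
    · obtain ⟨h1, h2, h3⟩ := hSH p.1 p.2 h
      have hd : 0 < U p.2 p.1 - U p.1 p.2 := by linarith
      simp only [ht, if_pos h]
      rw [max_lt_iff]
      constructor <;> rw [div_lt_one hd] <;> linarith
    · simp [ht, if_neg h]
  have hT0 : 0 ≤ T := by
    have h0 : t (⟨0, hNpos⟩, ⟨0, hNpos⟩) = 0 := by simp [ht]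
    have := Finset.le_sup' t (Finset.mem_univ (⟨0, hNpos⟩, ⟨0, hNpos⟩))
    rw [h0] at this
    exact this
  refine ⟨(T + 1) / 2, by linarith, by linarith, ?_⟩
  intro i j hij
  obtain ⟨h1, h2, h3⟩ := hSH i j hij
  have hd : 0 < U j i - U i j := by linarith
  have hle : t (i, j) ≤ T := Finset.le_sup' t (Finset.mem_univ (i, j))
  have hα : t (i, j) < (T + 1) / 2 := by linarith
  simp only [ht, if_pos hij, max_lt_iff] at hα
  obtain ⟨hr1, hr2⟩ := hα
  rw [div_lt_iff₀ hd] at hr1 hr2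
  refine ⟨by nlinarith, by nlinarith, by nlinarith⟩
end
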